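/- Let q ∈ Δ^N and p ∈ Δ^M have positive entries and let K ∈ ℝ^{N×M} have strictly positive entries. If there exist positive vectors u ∈ ℝ^N, v ∈ ℝ^M such that Γ_{ij} = u_i K_{ij} v_j satisfies Γ 1_M = q and Γᵀ 1_N = p, then Γ is the unique minimizer of ⟨C, Γ⟩ - ε H(Γ) over Γ(q,p), where K_{ij} = exp(-C_{ij}/ε). -/
import Mathlib


open scoped BigOperators

/-- The coupling polytope Γ(q,p). -/
def couplings {N M : ℕ} (q : Fin N → ℝ) (p : Fin M → ℝ) :
    Set (Matrix (Fin N) (Fin M) ℝ) :=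
  {Γ | (∀ i j, 0 ≤ Γ i j) ∧ (∀ i, ∑ j, Γ i j = q i) ∧ (∀ j, ∑ i, Γ i j = p j)}

lemma key_ineq {x y : ℝ} (hx : 0 < x) (hy : 0 ≤ y) :
    y - x ≤ y * Real.log y - y * Real.log x := by
  rcases eq_or_lt_of_le hy with h | h
  · simp [← h]
    linarith
  · have h1 : Real.log (x / y) ≤ x / y - 1 := Real.log_le_sub_one_of_pos (by positivity)
    have h2 : Real.log (x / y) = Real.log x - Real.log y :=
      Real.log_div (ne_of_gt hx) (ne_of_gt h)
    rw [h2] at h1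
    have h3 := mul_le_mul_of_nonneg_left h1 h.le
    have hxy : y * (x / y - 1) = x - y := by field_simp
    nlinarith

lemma key_ineq_strict {x y : ℝ} (hx : 0 < x) (hy : 0 ≤ y) (hne : y ≠ x) :
    y - x < y * Real.log y - y * Real.log x := by
  rcases eq_or_lt_of_le hy with h | h
  · simp [← h]
    linarith
  · have hq : x / y ≠ 1 := by
      intro hxy
      apply hne
      field_simp at hxy
      linarith
    have h1 : Real.log (x / y) < x / y - 1 :=
      Real.log_lt_sub_one_of_pos (by positivity) hq
    have h2 : Real.log (x / y) = Real.log x - Real.log y :=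
      Real.log_div (ne_of_gt hx) (ne_of_gt h)
    rw [h2] at h1
    have h3 := mul_lt_mul_of_pos_left h1 h
    have hxy : y * (x / y - 1) = x - y := by field_simp
    nlinarith

theorem stmt15 {N M : ℕ} (C : Matrix (Fin N) (Fin M) ℝ) (ε : ℝ) (hε : 0 < ε)
    (q : Fin N → ℝ) (p : Fin M → ℝ)
    (hq : ∀ i, 0 < q i) (hp : ∀ j, 0 < p j)
    (hqs : ∑ i, q i = 1) (hps : ∑ j, p j = 1)
    (K : Matrix (Fin N) (Fin M) ℝ) (hK : ∀ i j, K i j = Real.exp (-C i j / ε))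
    (u : Fin N → ℝ) (v : Fin M → ℝ) (hu : ∀ i, 0 < u i) (hv : ∀ j, 0 < v j)
    (Γ : Matrix (Fin N) (Fin M) ℝ) (hΓ : ∀ i j, Γ i j = u i * K i j * v j)
    (hfeas : Γ ∈ couplings q p) :
    ∀ Γ' ∈ couplings q p, Γ' ≠ Γ →
      (∑ i, ∑ j, C i j * Γ i j) -
          ε * (-∑ i, ∑ j, Γ i j * (Real.log (Γ i j) - 1)) <
        (∑ i, ∑ j, C i j * Γ' i j) -
          ε * (-∑ i, ∑ j, Γ' i j * (Real.log (Γ' i j) - 1)) := by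
  intro Γ' hfeas' hne
  obtain ⟨hpos, hrow, hcol⟩ := hfeas
  obtain ⟨hpos', hrow', hcol'⟩ := hfeas'
  -- Γ entries are positive
  have hΓpos : ∀ i j, 0 < Γ i j := by
    intro i j
    rw [hΓ]
    have hKpos : 0 < K i j := by rw [hK]; exact Real.exp_pos _
    exact mul_pos (mul_pos (hu i) hKpos) (hv j)
  -- log Γ identity: ε * log (Γ i j) = ε * log (u i) + ε * log (v j) - C i j
  have hlog : ∀ i j, ε * Real.log (Γ i j) = ε * Real.log (u i) + ε * Real.log (v j) - C i j := by
    intro i j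
    rw [hΓ, hK, Real.log_mul (mul_pos (hu i) (Real.exp_pos _)).ne' (ne_of_gt (hv j)),
      Real.log_mul (ne_of_gt (hu i)) (ne_of_gt (Real.exp_pos _)), Real.log_exp]
    field_simp
    ring
  set a : Fin N → ℝ := fun i => ε * Real.log (u i) with ha
  set b : Fin M → ℝ := fun j => ε * Real.log (v j) with hb
  -- per-entry gap lemma
  set g : Matrix (Fin N) (Fin M) ℝ → Fin N → Fin M → ℝ :=
    fun Z i j => C i j * Z i j + ε * (Z i j * (Real.log (Z i j) - 1)) with hg
  have hgap : ∀ i j, g Γ i j + (a i + b j) * (Γ' i j - Γ i j) ≤ g Γ' i j := by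
    intro i j
    have hk := key_ineq (hΓpos i j) (hpos' i j)
    have hk2 := mul_le_mul_of_nonneg_left hk hε.le
    have hab : a i + b j = C i j + ε * Real.log (Γ i j) := by
      simp only [ha, hb]; linarith [hlog i j]
    simp only [hg]
    rw [hab]
    nlinarith [hk2]
  have hgapstrict : ∀ i j, Γ' i j ≠ Γ i j →
      g Γ i j + (a i + b j) * (Γ' i j - Γ i j) < g Γ' i j := by
    intro i j hne'
    have hk := key_ineq_strict (hΓpos i j) (hpos' i j) hne'
    have hk2 := mul_lt_mul_of_pos_left hk hε
    have hab : a i + b j = C i j + ε * Real.log (Γ i j) := by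
      simp only [ha, hb]; linarith [hlog i j]
    simp only [hg]
    rw [hab]
    nlinarith [hk2]
  -- the linear correction term sums to zero
  have hzero : ∑ i, ∑ j, (a i + b j) * (Γ' i j - Γ i j) = 0 := by
    have h1 : ∑ i, ∑ j, a i * (Γ' i j - Γ i j) = 0 := by
      apply Finset.sum_eq_zero
      intro i _
      rw [← Finset.mul_sum, Finset.sum_sub_distrib, hrow' i, hrow i]
      ring
    have h2 : ∑ j, ∑ i, b j * (Γ' i j - Γ i j) = 0 := by
      apply Finset.sum_eq_zero
      intro j _
      rw [← Finset.mul_sum, Finset.sum_sub_distrib, hcol' j, hcol j]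
      ring
    rw [Finset.sum_comm] at h2
    calc ∑ i, ∑ j, (a i + b j) * (Γ' i j - Γ i j)
        = ∑ i, ∑ j, (a i * (Γ' i j - Γ i j) + b j * (Γ' i j - Γ i j)) := by
          congr 1; funext i; congr 1; funext j; ring
      _ = (∑ i, ∑ j, a i * (Γ' i j - Γ i j)) + ∑ i, ∑ j, b j * (Γ' i j - Γ i j) := by
          simp [Finset.sum_add_distrib]
      _ = 0 := by rw [h1, h2]; ring
  -- find a differing entry
  have hexists : ∃ ij : Fin N × Fin M, Γ' ij.1 ij.2 ≠ Γ ij.1 ij.2 := by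
    by_contra hc
    push_neg at hc
    exact hne (by funext i j; exact hc (i, j))
  obtain ⟨⟨i0, j0⟩, hij⟩ := hexists
  -- sum over product
  have hsum : ∑ ij : Fin N × Fin M, (g Γ ij.1 ij.2 + (a ij.1 + b ij.2) * (Γ' ij.1 ij.2 - Γ ij.1 ij.2))
      < ∑ ij : Fin N × Fin M, g Γ' ij.1 ij.2 := by
    apply Finset.sum_lt_sum
    · intro ij _; exact hgap ij.1 ij.2
    · exact ⟨(i0, j0), Finset.mem_univ _, hgapstrict i0 j0 hij⟩
  rw [Finset.sum_add_distrib] at hsum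
  have e1 : ∑ ij : Fin N × Fin M, g Γ ij.1 ij.2 = ∑ i, ∑ j, g Γ i j := by
    rw [Fintype.sum_prod_type]
  have e2 : ∑ ij : Fin N × Fin M, g Γ' ij.1 ij.2 = ∑ i, ∑ j, g Γ' i j := by
    rw [Fintype.sum_prod_type]
  have e3 : ∑ ij : Fin N × Fin M, (a ij.1 + b ij.2) * (Γ' ij.1 ij.2 - Γ ij.1 ij.2)
      = ∑ i, ∑ j, (a i + b j) * (Γ' i j - Γ i j) := by
    rw [Fintype.sum_prod_type]
  rw [e1, e2, e3, hzero, add_zero] at hsum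
  -- unfold g and conclude
  have eg : ∀ Z : Matrix (Fin N) (Fin M) ℝ,
      ∑ i, ∑ j, g Z i j =
        (∑ i, ∑ j, C i j * Z i j) - ε * (-∑ i, ∑ j, Z i j * (Real.log (Z i j) - 1)) := by
    intro Z
    simp only [hg]
    rw [mul_neg, sub_neg_eq_add, Finset.mul_sum, ← Finset.sum_add_distrib]
    refine Finset.sum_congr rfl fun i _ => ?_
    rw [Finset.mul_sum, ← Finset.sum_add_distrib]
  rw [eg Γ, eg Γ'] at hsum
  exact hsum
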